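/- Let φ be a nondegenerate Bernstein function with extension φ(z) to Re z ≥ 0, and set Θ_φ(a,b) = ∫_{a/b}^∞ log( |φ(b u + i b)| / φ(b u) ) du for a ≥ 0, b > 0. Then for all a > 0 and b > 0: Θ_φ(0,b) − (a/b)·log(1 + b²/a²) − arctan(a/b) ≤ Θ_φ(a,b) ≤ Θ_φ(0,b). Consequently, for every a ≥ 0, liminf_{b→∞} Θ_φ(a,b) = liminf_{b→∞} Θ_φ(0,b), and this common value belongs to [0, π/2]. (Paper: Proposition 'thm:Theorem11', item 1, with inequality (eq:Hestimate).) -/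

import Mathlib

open MeasureTheory

/-- The quantity `Θ_φ(a,b) = ∫_{a/b}^∞ log(|φ(bu + ib)|/φ(bu)) du`. -/
noncomputable def Theta (φC : ℂ → ℂ) (a b : ℝ) : ℝ :=
  ∫ u in Set.Ioi (a / b),
    Real.log (‖φC (((b * u : ℝ) : ℂ) + (b : ℝ) * Complex.I)‖ / (φC ((b * u : ℝ) : ℂ)).re)

open Filter Set


-- key kernel estimate: |1 - e^{-w}| ≤ (|w|/Re w) (1 - e^{-Re w})
lemma kernel_norm_le {w : ℂ} (hw : 0 < w.re) :
    ‖1 - Complex.exp (-w)‖ ≤ ‖w‖ / w.re * (1 - Real.exp (-w.re)) := by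
  have hwne : w ≠ 0 := fun h => by simp [h] at hw
  have hint : ∫ t in (0:ℝ)..1, Complex.exp ((-w) * t)
      = (Complex.exp (-w) - 1)/(-w) := by
    have := integral_exp_mul_complex (a := 0) (b := 1) (c := -w) (neg_ne_zero.2 hwne)
    simpa using this
  have hid : 1 - Complex.exp (-w) = w * ∫ t in (0:ℝ)..1, Complex.exp ((-w) * t) := by
    rw [hint]
    rw [div_eq_mul_inv]
    have hne : (-w) ≠ 0 := neg_ne_zero.2 hwne
    have : w * ((Complex.exp (-w) - 1) * (-w)⁻¹) = -(Complex.exp (-w) - 1) * ((-w) * (-w)⁻¹) := by ring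
    rw [this, mul_inv_cancel₀ hne, mul_one]
    ring
  have hnormint : ‖∫ t in (0:ℝ)..1, Complex.exp ((-w) * t)‖
      ≤ (1 - Real.exp (-w.re)) / w.re := by
    have h1 : ‖∫ t in (0:ℝ)..1, Complex.exp ((-w) * t)‖
        ≤ ∫ t in (0:ℝ)..1, ‖Complex.exp ((-w) * t)‖ :=
      intervalIntegral.norm_integral_le_integral_norm zero_le_one
    have h2 : ∀ t : ℝ, ‖Complex.exp ((-w) * t)‖ = Real.exp (-w.re * t) := by
      intro t
      rw [Complex.norm_exp]
      congr 1
      simp [Complex.mul_re]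
    have h3 : ∫ t in (0:ℝ)..1, ‖Complex.exp ((-w) * t)‖
        = ∫ t in (0:ℝ)..1, Real.exp (-w.re * t) := by
      simp_rw [h2]
    have h4 : ∫ t in (0:ℝ)..1, Real.exp (-w.re * t)
        = (1 - Real.exp (-w.re)) / w.re := by
      have hD : ∀ t ∈ Set.uIcc (0:ℝ) 1,
          HasDerivAt (fun t : ℝ => -Real.exp (-w.re * t)/w.re) (Real.exp (-w.re * t)) t := by
        intro t _
        have : HasDerivAt (fun t : ℝ => -w.re * t) (-w.re) t := by
          simpa using (hasDerivAt_id t).const_mul (-w.re)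
        have hx : w.re ≠ 0 := ne_of_gt hw
        exact ((this.exp).neg.div_const w.re).congr_deriv
          (by rw [neg_mul_eq_mul_neg, neg_neg, mul_div_assoc, div_self hx, mul_one])
      have := intervalIntegral.integral_eq_sub_of_hasDerivAt hD
        ((Real.continuous_exp.comp (continuous_const.mul continuous_id)).intervalIntegrable 0 1)
      rw [this]
      field_simp
      rw [mul_zero, neg_zero, Real.exp_zero]; ring
    rw [h3, h4] at h1
    exact h1
  calc ‖1 - Complex.exp (-w)‖ = ‖w‖ * ‖∫ t in (0:ℝ)..1, Complex.exp ((-w) * t)‖ := by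
        rw [hid, norm_mul]
    _ ≤ ‖w‖ * ((1 - Real.exp (-w.re)) / w.re) :=
        mul_le_mul_of_nonneg_left hnormint (norm_nonneg w)
    _ = ‖w‖ / w.re * (1 - Real.exp (-w.re)) := by ring

lemma one_sub_exp_le {x : ℝ} : 1 - Real.exp (-x) ≤ x := by
  nlinarith [Real.add_one_le_exp (-x)]

lemma one_sub_exp_nonneg {x : ℝ} (hx : 0 ≤ x) : 0 ≤ 1 - Real.exp (-x) := by
  have : Real.exp (-x) ≤ 1 := Real.exp_le_one_iff.mpr (by linarith)
  linarith

lemma kernel_norm_le' {w : ℂ} (hw : 0 < w.re) : ‖1 - Complex.exp (-w)‖ ≤ ‖w‖ := by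
  calc ‖1 - Complex.exp (-w)‖ ≤ ‖w‖ / w.re * (1 - Real.exp (-w.re)) := kernel_norm_le hw
    _ ≤ ‖w‖ / w.re * w.re := by
        apply mul_le_mul_of_nonneg_left one_sub_exp_le
        positivity
    _ = ‖w‖ := by field_simp

lemma kernel_norm_le2 {w : ℂ} (hw : 0 ≤ w.re) : ‖1 - Complex.exp (-w)‖ ≤ 2 := by
  calc ‖1 - Complex.exp (-w)‖ ≤ ‖(1:ℂ)‖ + ‖Complex.exp (-w)‖ := norm_sub_le _ _
    _ ≤ 1 + 1 := by
        gcongr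
        · simp
        · rw [Complex.norm_exp]
          apply Real.exp_le_one_iff.mpr
          simpa using hw
    _ = 2 := by norm_num

lemma kernel_re_ge {w : ℂ} : 1 - Real.exp (-w.re) ≤ (1 - Complex.exp (-w)).re := by
  simp only [Complex.sub_re, Complex.one_re]
  have : (Complex.exp (-w)).re ≤ Real.exp (-w.re) := by
    rw [Complex.exp_re]
    have h1 : Real.cos (-w).im ≤ 1 := Real.cos_le_one _
    have h2 : (0:ℝ) < Real.exp (-w).re := Real.exp_pos _
    calc Real.exp (-w).re * Real.cos (-w).im ≤ Real.exp (-w).re * 1 := by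
          exact mul_le_mul_of_nonneg_left h1 h2.le
      _ = Real.exp (-w.re) := by simp
  linarith
section Phi
variable {φC : ℂ → ℂ} {m σ2 : ℝ} {μ : Measure ℝ}

lemma mu_ae_pos (hμ0 : μ (Set.Iic 0) = 0) : ∀ᵐ y ∂μ, 0 < y := by
  rw [ae_iff]
  convert hμ0 using 2
  ext y; simp [not_lt]

lemma Kint (hμ0 : μ (Set.Iic 0) = 0) (hμint : Integrable (fun y : ℝ => min 1 y) μ)
    {z : ℂ} (hz : 0 < z.re) :
    Integrable (fun y : ℝ => 1 - Complex.exp (-(z * y))) μ := by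
  apply Integrable.mono' (hμint.const_mul (max 2 ‖z‖))
  · apply Continuous.aestronglyMeasurable
    fun_prop
  · filter_upwards [mu_ae_pos hμ0] with y hy
    have hre : (z * (y:ℂ)).re = z.re * y := by simp [Complex.mul_re]
    rcases le_total y 1 with h1 | h1
    · calc ‖1 - Complex.exp (-(z*y))‖ ≤ ‖z * (y:ℂ)‖ :=
            kernel_norm_le' (by rw [hre]; positivity)
        _ = ‖z‖ * y := by rw [norm_mul, Complex.norm_real, Real.norm_eq_abs, abs_of_pos hy]
        _ ≤ max 2 ‖z‖ * min 1 y := by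
            rw [min_eq_right h1]
            exact mul_le_mul_of_nonneg_right (le_max_right _ _) hy.le
    · calc ‖1 - Complex.exp (-(z*y))‖ ≤ 2 := kernel_norm_le2 (by rw [hre]; positivity)
        _ ≤ max 2 ‖z‖ * min 1 y := by
            rw [min_eq_left h1, mul_one]; exact le_max_left _ _

lemma Rint (hμ0 : μ (Set.Iic 0) = 0) (hμint : Integrable (fun y : ℝ => min 1 y) μ)
    {x : ℝ} (hx : 0 < x) :
    Integrable (fun y : ℝ => 1 - Real.exp (-(x * y))) μ := by
  apply Integrable.mono' (hμint.const_mul (max 1 x))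
  · apply Continuous.aestronglyMeasurable
    fun_prop
  · filter_upwards [mu_ae_pos hμ0] with y hy
    have h0 : 0 ≤ 1 - Real.exp (-(x*y)) := one_sub_exp_nonneg (by positivity)
    rw [Real.norm_eq_abs, abs_of_nonneg h0]
    rcases le_total y 1 with h1 | h1
    · calc 1 - Real.exp (-(x*y)) ≤ x * y := one_sub_exp_le
        _ ≤ max 1 x * min 1 y := by
            rw [min_eq_right h1]
            exact mul_le_mul_of_nonneg_right (le_max_right _ _) hy.le
    · calc 1 - Real.exp (-(x*y)) ≤ 1 := by
            have := Real.exp_pos (-(x*y)); linarith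
        _ ≤ max 1 x * min 1 y := by
            rw [min_eq_left h1, mul_one]; exact le_max_left _ _

lemma kernel_cast (x y : ℝ) :
    (1 - Complex.exp (-((x:ℂ) * (y:ℂ)))) = ((1 - Real.exp (-(x*y)) : ℝ) : ℂ) := by
  push_cast [← Complex.ofReal_exp]
  norm_num

lemma phi_re_eq (hμ0 : μ (Set.Iic 0) = 0) (hμint : Integrable (fun y : ℝ => min 1 y) μ)
    (hrepC : ∀ z : ℂ, 0 ≤ z.re →
      φC z = (m : ℂ) + (σ2 : ℂ) * z + ∫ y, (1 - Complex.exp (-(z * (y : ℂ)))) ∂μ)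
    {x : ℝ} (hx : 0 < x) :
    (φC x).re = m + σ2 * x + ∫ y, (1 - Real.exp (-(x * y))) ∂μ := by
  rw [hrepC x (by simp [hx.le])]
  rw [Complex.add_re, Complex.add_re]
  congr 1
  · simp [Complex.mul_re]
  · have : (∫ y, (1 - Complex.exp (-((x:ℂ) * (y:ℂ)))) ∂μ)
        = ((∫ y, (1 - Real.exp (-(x * y))) ∂μ : ℝ) : ℂ) := by
      rw [show ((∫ y, (1 - Real.exp (-(x * y))) ∂μ : ℝ) : ℂ)
          = ∫ y, ((1 - Real.exp (-(x * y)) : ℝ) : ℂ) ∂μ from integral_ofReal.symm]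
      apply integral_congr_ae
      filter_upwards with y using kernel_cast x y
    rw [this, Complex.ofReal_re]

lemma phi_re_mono (hμ0 : μ (Set.Iic 0) = 0) (hμint : Integrable (fun y : ℝ => min 1 y) μ)
    (hrepC : ∀ z : ℂ, 0 ≤ z.re →
      φC z = (m : ℂ) + (σ2 : ℂ) * z + ∫ y, (1 - Complex.exp (-(z * (y : ℂ)))) ∂μ)
    {z : ℂ} (hz : 0 < z.re) :
    (φC ((z.re : ℝ) : ℂ)).re ≤ (φC z).re := by
  have hint_re : (∫ y, (1 - Complex.exp (-(z * (y:ℂ)))) ∂μ).re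
      = ∫ y, (1 - Complex.exp (-(z * (y:ℂ)))).re ∂μ := by
    rw [← RCLike.re_to_complex]
    rw [← integral_re (Kint hμ0 hμint hz)]
    rfl
  have hre2 : (φC z).re = m + σ2 * z.re
      + ∫ y, (1 - Complex.exp (-(z * (y:ℂ)))).re ∂μ := by
    rw [hrepC z hz.le, Complex.add_re, Complex.add_re, hint_re]
    simp [Complex.mul_re]
  rw [hre2]
  have hx0 : ((z.re : ℝ) : ℂ).re = z.re := Complex.ofReal_re _
  rw [phi_re_eq hμ0 hμint hrepC (x := z.re) hz, ]
  have hmono : ∫ y, (1 - Real.exp (-(z.re * y))) ∂μ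
      ≤ ∫ y, (1 - Complex.exp (-(z * (y:ℂ)))).re ∂μ := by
    apply integral_mono_ae (Rint hμ0 hμint hz) ((Kint hμ0 hμint hz).re)
    filter_upwards [mu_ae_pos hμ0] with y hy
    have := kernel_re_ge (w := z * (y:ℂ))
    have hre : (z * (y:ℂ)).re = z.re * y := by simp [Complex.mul_re]
    rw [hre] at this
    exact this
  linarith

lemma phi_re_pos (hm : 0 ≤ m) (hσ : 0 ≤ σ2)
    (hμ0 : μ (Set.Iic 0) = 0) (hμint : Integrable (fun y : ℝ => min 1 y) μ)
    (hrepC : ∀ z : ℂ, 0 ≤ z.re →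
      φC z = (m : ℂ) + (σ2 : ℂ) * z + ∫ y, (1 - Complex.exp (-(z * (y : ℂ)))) ∂μ)
    (hnd : ¬ (m = 0 ∧ σ2 = 0 ∧ μ = 0))
    {x : ℝ} (hx : 0 < x) : 0 < (φC x).re := by
  rw [phi_re_eq hμ0 hμint hrepC hx]
  have hintnn : 0 ≤ ∫ y, (1 - Real.exp (-(x * y))) ∂μ := by
    apply integral_nonneg_of_ae
    filter_upwards [mu_ae_pos hμ0] with y hy
    exact one_sub_exp_nonneg (by positivity)
  rcases lt_or_eq_of_le hm with hm' | hm'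
  · nlinarith
  rcases lt_or_eq_of_le hσ with hσ' | hσ'
  · nlinarith
  have hμne : μ ≠ 0 := fun h => hnd ⟨hm'.symm, hσ'.symm, h⟩
  have hIoi : 0 < μ (Set.Ioi 0) := by
    rcases eq_or_ne (μ (Set.Ioi 0)) 0 with h | h
    · exfalso
      apply hμne
      have : μ Set.univ = 0 := by
        have := measure_union_le (μ := μ) (Set.Iic 0) (Set.Ioi 0)
        rw [Set.Iic_union_Ioi] at this
        simpa [hμ0, h] using this
      exact MeasureTheory.Measure.measure_univ_eq_zero.mp this
    · exact h.bot_lt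
  have hpos : 0 < ∫ y, (1 - Real.exp (-(x * y))) ∂μ := by
    rw [integral_pos_iff_support_of_nonneg_ae]
    · apply lt_of_lt_of_le hIoi
      apply measure_mono
      intro y hy
      have : 0 < 1 - Real.exp (-(x*y)) := by
        have hxy : 0 < x * y := mul_pos hx hy
        have : Real.exp (-(x*y)) < 1 := Real.exp_lt_one_iff.mpr (by linarith)
        linarith
      exact fun h => by simp [h] at this
    · filter_upwards [mu_ae_pos hμ0] with y hy
      exact one_sub_exp_nonneg (by positivity)
    · exact Rint hμ0 hμint hx
  nlinarith

lemma phi_norm_le (hm : 0 ≤ m) (hσ : 0 ≤ σ2)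
    (hμ0 : μ (Set.Iic 0) = 0) (hμint : Integrable (fun y : ℝ => min 1 y) μ)
    (hrepC : ∀ z : ℂ, 0 ≤ z.re →
      φC z = (m : ℂ) + (σ2 : ℂ) * z + ∫ y, (1 - Complex.exp (-(z * (y : ℂ)))) ∂μ)
    {z : ℂ} (hz : 0 < z.re) :
    ‖φC z‖ ≤ ‖z‖ / z.re * (φC ((z.re : ℝ) : ℂ)).re := by
  set r : ℝ := ‖z‖ / z.re with hr
  have hxle : z.re ≤ ‖z‖ := by
    calc z.re ≤ |z.re| := le_abs_self _
      _ ≤ ‖z‖ := Complex.abs_re_le_norm z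
      _ = ‖z‖ := rfl
  have hr1 : 1 ≤ r := (one_le_div hz).mpr hxle
  have hrx : r * z.re = ‖z‖ := div_mul_cancel₀ _ (ne_of_gt hz)
  have hIK : ‖∫ y, (1 - Complex.exp (-(z * (y:ℂ)))) ∂μ‖
      ≤ r * ∫ y, (1 - Real.exp (-(z.re * y))) ∂μ := by
    calc ‖∫ y, (1 - Complex.exp (-(z * (y:ℂ)))) ∂μ‖
        ≤ ∫ y, ‖1 - Complex.exp (-(z * (y:ℂ)))‖ ∂μ := norm_integral_le_integral_norm _
      _ ≤ ∫ y, r * (1 - Real.exp (-(z.re * y))) ∂μ := by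
          apply integral_mono_ae ((Kint hμ0 hμint hz).norm)
            ((Rint hμ0 hμint hz).const_mul r)
          filter_upwards [mu_ae_pos hμ0] with y hy
          have hre : (z * (y:ℂ)).re = z.re * y := by simp [Complex.mul_re]
          have hb := kernel_norm_le (w := z * (y:ℂ)) (by rw [hre]; positivity)
          rw [hre] at hb
          have : ‖z * (y:ℂ)‖ / (z.re * y) = r := by
            rw [norm_mul, Complex.norm_real, Real.norm_eq_abs, abs_of_pos hy, hr]
            field_simp
          rw [this] at hb
          exact hb
      _ = r * ∫ y, (1 - Real.exp (-(z.re * y))) ∂μ := integral_const_mul r _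
  rw [hrepC z hz.le, phi_re_eq hμ0 hμint hrepC hz]
  have hintnn : 0 ≤ ∫ y, (1 - Real.exp (-(z.re * y))) ∂μ := by
    apply integral_nonneg_of_ae
    filter_upwards [mu_ae_pos hμ0] with y hy
    exact one_sub_exp_nonneg (by positivity)
  calc ‖(m:ℂ) + (σ2:ℂ) * z + ∫ y, (1 - Complex.exp (-(z * (y:ℂ)))) ∂μ‖
      ≤ ‖(m:ℂ) + (σ2:ℂ) * z‖ + ‖∫ y, (1 - Complex.exp (-(z * (y:ℂ)))) ∂μ‖ := norm_add_le _ _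
    _ ≤ (‖(m:ℂ)‖ + ‖(σ2:ℂ) * z‖) + r * ∫ y, (1 - Real.exp (-(z.re * y))) ∂μ := by
        exact add_le_add (norm_add_le _ _) hIK
    _ = m + σ2 * ‖z‖ + r * ∫ y, (1 - Real.exp (-(z.re * y))) ∂μ := by
        rw [norm_mul, Complex.norm_real, Complex.norm_real, Real.norm_eq_abs,
          Real.norm_eq_abs, abs_of_nonneg hm, abs_of_nonneg hσ]
    _ ≤ r * m + σ2 * (r * z.re) + r * ∫ y, (1 - Real.exp (-(z.re * y))) ∂μ := by
        rw [hrx]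
        have : m ≤ r * m := le_mul_of_one_le_left hm hr1
        linarith
    _ = r * (m + σ2 * z.re + ∫ y, (1 - Real.exp (-(z.re * y))) ∂μ) := by ring

end Phi
section Main
variable {φC : ℂ → ℂ} {m σ2 : ℝ} {μ : Measure ℝ}

lemma z_re (b u : ℝ) : ((((b*u : ℝ) : ℂ)) + (b : ℝ) * Complex.I).re = b*u := by simp

lemma z_norm_div {b u : ℝ} (hb : 0 < b) (hu : 0 < u) :
    ‖(((b*u : ℝ) : ℂ)) + (b : ℝ) * Complex.I‖ / (b*u) = Real.sqrt (1 + 1/u^2) := by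
  have h1 : ‖(((b*u : ℝ) : ℂ)) + (b : ℝ) * Complex.I‖ = Real.sqrt ((b*u)^2 + b^2) := by
    rw [Complex.norm_def, Complex.normSq_apply]
    simp
    ring_nf
  rw [h1]
  have h2 : (b*u)^2 + b^2 = (b*u)^2 * (1 + 1/u^2) := by field_simp
  rw [h2, Real.sqrt_mul (sq_nonneg _), Real.sqrt_sq (by positivity)]
  rw [mul_div_assoc, mul_comm]
  field_simp

lemma f_sandwich (hm : 0 ≤ m) (hσ : 0 ≤ σ2)
    (hμ0 : μ (Set.Iic 0) = 0) (hμint : Integrable (fun y : ℝ => min 1 y) μ)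
    (hrepC : ∀ z : ℂ, 0 ≤ z.re →
      φC z = (m : ℂ) + (σ2 : ℂ) * z + ∫ y, (1 - Complex.exp (-(z * (y : ℂ)))) ∂μ)
    (hnd : ¬ (m = 0 ∧ σ2 = 0 ∧ μ = 0))
    {b u : ℝ} (hb : 0 < b) (hu : 0 < u) :
    (0 ≤ Real.log (‖φC (((b * u : ℝ) : ℂ) + (b : ℝ) * Complex.I)‖ / (φC ((b * u : ℝ) : ℂ)).re))
    ∧ Real.log (‖φC (((b * u : ℝ) : ℂ) + (b : ℝ) * Complex.I)‖ / (φC ((b * u : ℝ) : ℂ)).re)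
        ≤ (1/2) * Real.log (1 + 1/u^2)
    ∧ 1 ≤ ‖φC (((b * u : ℝ) : ℂ) + (b : ℝ) * Complex.I)‖ / (φC ((b * u : ℝ) : ℂ)).re := by
  set z : ℂ := (((b*u : ℝ) : ℂ)) + (b : ℝ) * Complex.I with hzdef
  have hzre : z.re = b*u := z_re b u
  have hx : 0 < b*u := mul_pos hb hu
  have hz : 0 < z.re := by rw [hzre]; exact hx
  have hcast : ((z.re : ℝ) : ℂ) = ((b*u : ℝ) : ℂ) := by rw [hzre]
  have hP : 0 < (φC ((b*u : ℝ) : ℂ)).re := phi_re_pos hm hσ hμ0 hμint hrepC hnd hx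
  have hlow : (φC ((b*u : ℝ) : ℂ)).re ≤ ‖φC z‖ := by
    have h1 := phi_re_mono hμ0 hμint hrepC hz
    rw [hcast] at h1
    calc (φC ((b*u : ℝ) : ℂ)).re ≤ (φC z).re := h1
      _ ≤ ‖φC z‖ := Complex.re_le_norm _
      _ = ‖φC z‖ := rfl
  have hup : ‖φC z‖ ≤ Real.sqrt (1 + 1/u^2) * (φC ((b*u : ℝ) : ℂ)).re := by
    have h1 := phi_norm_le hm hσ hμ0 hμint hrepC hz
    rw [hcast, hzre] at h1
    rwa [z_norm_div hb hu] at h1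
  have hratio1 : 1 ≤ ‖φC z‖ / (φC ((b*u : ℝ) : ℂ)).re := (one_le_div hP).mpr hlow
  refine ⟨Real.log_nonneg hratio1, ?_, hratio1⟩
  have hs : (0:ℝ) ≤ 1 + 1/u^2 := by positivity
  have h2 : ‖φC z‖ / (φC ((b*u : ℝ) : ℂ)).re ≤ Real.sqrt (1 + 1/u^2) :=
    (div_le_iff₀ hP).mpr hup
  calc Real.log (‖φC z‖ / (φC ((b*u : ℝ) : ℂ)).re) ≤ Real.log (Real.sqrt (1 + 1/u^2)) :=
        Real.log_le_log (by linarith) h2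
    _ = Real.log (1 + 1/u^2) / 2 := Real.log_sqrt hs
    _ = (1/2) * Real.log (1 + 1/u^2) := by ring

lemma int_continuousAt (hμ0 : μ (Set.Iic 0) = 0)
    (hμint : Integrable (fun y : ℝ => min 1 y) μ)
    {z₀ : ℂ} (hz : 0 < z₀.re) :
    ContinuousAt (fun z : ℂ => ∫ y, (1 - Complex.exp (-(z * (y:ℂ)))) ∂μ) z₀ := by
  apply continuousAt_of_dominated (bound := fun y => max 2 (‖z₀‖+1) * min 1 y)
  · filter_upwards with z
    apply Continuous.aestronglyMeasurable
    fun_prop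
  · have hopen : IsOpen {z : ℂ | 0 < z.re ∧ ‖z‖ < ‖z₀‖ + 1} := by
      have h1 : IsOpen {z : ℂ | 0 < z.re} := isOpen_lt continuous_const Complex.continuous_re
      have h2 : IsOpen {z : ℂ | ‖z‖ < ‖z₀‖ + 1} := isOpen_lt continuous_norm continuous_const
      exact (Set.setOf_and (p := fun z : ℂ => 0 < z.re) ▸ (h1.inter h2))
    have hmem : {z : ℂ | 0 < z.re ∧ ‖z‖ < ‖z₀‖ + 1} ∈ nhds z₀ :=
      hopen.mem_nhds ⟨hz, lt_add_one _⟩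
    filter_upwards [hmem] with z hzmem
    filter_upwards [mu_ae_pos hμ0] with y hy
    have hre : (z * (y:ℂ)).re = z.re * y := by simp [Complex.mul_re]
    rcases le_total y 1 with h1 | h1
    · calc ‖1 - Complex.exp (-(z*y))‖ ≤ ‖z * (y:ℂ)‖ :=
            kernel_norm_le' (by rw [hre]; exact mul_pos hzmem.1 hy)
        _ = ‖z‖ * y := by rw [norm_mul, Complex.norm_real, Real.norm_eq_abs, abs_of_pos hy]
        _ ≤ max 2 (‖z₀‖+1) * min 1 y := by
            rw [min_eq_right h1]
            apply mul_le_mul (le_trans hzmem.2.le (le_max_right _ _)) le_rfl hy.le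
            positivity
    · calc ‖1 - Complex.exp (-(z*y))‖ ≤ 2 :=
            kernel_norm_le2 (by rw [hre]; exact (mul_pos hzmem.1 hy).le)
        _ ≤ max 2 (‖z₀‖+1) * min 1 y := by
            rw [min_eq_left h1, mul_one]; exact le_max_left _ _
  · exact hμint.const_mul _
  · filter_upwards with y
    apply Continuous.continuousAt
    fun_prop

lemma f_continuousOn (hm : 0 ≤ m) (hσ : 0 ≤ σ2)
    (hμ0 : μ (Set.Iic 0) = 0) (hμint : Integrable (fun y : ℝ => min 1 y) μ)
    (hrepC : ∀ z : ℂ, 0 ≤ z.re →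
      φC z = (m : ℂ) + (σ2 : ℂ) * z + ∫ y, (1 - Complex.exp (-(z * (y : ℂ)))) ∂μ)
    (hnd : ¬ (m = 0 ∧ σ2 = 0 ∧ μ = 0)) {b : ℝ} (hb : 0 < b) :
    ContinuousOn (fun u : ℝ =>
      Real.log (‖φC (((b * u : ℝ) : ℂ) + (b : ℝ) * Complex.I)‖ / (φC ((b * u : ℝ) : ℂ)).re))
      (Set.Ioi 0) := by
  intro u₀ hu₀
  have hu₀' : (0:ℝ) < u₀ := hu₀
  apply ContinuousAt.continuousWithinAt
  have hγ1 : Continuous (fun u : ℝ => (((b*u : ℝ) : ℂ)) + (b : ℝ) * Complex.I) := by fun_prop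
  have hγ2 : Continuous (fun u : ℝ => ((b*u : ℝ) : ℂ)) := by fun_prop
  have hΦ : ∀ {z₀ : ℂ}, 0 < z₀.re →
      ContinuousAt (fun z : ℂ => (m:ℂ) + (σ2:ℂ) * z + ∫ y, (1 - Complex.exp (-(z * (y:ℂ)))) ∂μ)
        z₀ := by
    intro z₀ hz₀
    exact ((continuousAt_const.add (continuousAt_const.mul continuousAt_id)).add
      (int_continuousAt hμ0 hμint hz₀))
  have hev : ∀ᶠ u in nhds u₀, u ∈ Set.Ioi (0:ℝ) := isOpen_Ioi.mem_nhds hu₀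
  have hN1 : ContinuousAt (fun u : ℝ => φC ((((b*u : ℝ) : ℂ)) + (b : ℝ) * Complex.I)) u₀ := by
    have hc : ContinuousAt (fun u : ℝ =>
        (m:ℂ) + (σ2:ℂ) * ((((b*u : ℝ) : ℂ)) + (b : ℝ) * Complex.I)
        + ∫ y, (1 - Complex.exp (-(((((b*u : ℝ) : ℂ)) + (b : ℝ) * Complex.I) * (y:ℂ)))) ∂μ) u₀ :=
      (hΦ (by rw [z_re]; exact mul_pos hb hu₀')).comp hγ1.continuousAt
    apply hc.congr
    filter_upwards [hev] with u hu
    exact (hrepC _ (by rw [z_re]; exact (mul_pos hb hu).le)).symm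
  have hN2 : ContinuousAt (fun u : ℝ => φC ((b*u : ℝ) : ℂ)) u₀ := by
    have hc : ContinuousAt (fun u : ℝ =>
        (m:ℂ) + (σ2:ℂ) * ((b*u : ℝ) : ℂ)
        + ∫ y, (1 - Complex.exp (-(((b*u : ℝ) : ℂ) * (y:ℂ)))) ∂μ) u₀ :=
      (hΦ (by simp; exact mul_pos hb hu₀')).comp hγ2.continuousAt
    apply hc.congr
    filter_upwards [hev] with u hu
    exact (hrepC _ (by simp; exact (mul_pos hb hu).le)).symm
  have hP : 0 < (φC ((b*u₀ : ℝ) : ℂ)).re :=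
    phi_re_pos hm hσ hμ0 hμint hrepC hnd (mul_pos hb hu₀')
  have hratio := (f_sandwich hm hσ hμ0 hμint hrepC hnd hb hu₀').2.2
  apply ContinuousAt.log
  · exact (hN1.norm).div (Complex.continuous_re.continuousAt.comp hN2) (ne_of_gt hP)
  · exact ne_of_gt (lt_of_lt_of_le one_pos hratio)

end Main

noncomputable def Fb (u : ℝ) : ℝ := u * Real.log (1 + 1/u^2) + 2 * Real.arctan u

lemma Fb_zero : Fb 0 = 0 := by simp [Fb]

lemma gb_nonneg {u : ℝ} : 0 ≤ Real.log (1 + 1/u^2) := by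
  apply Real.log_nonneg
  nlinarith [sq_nonneg u, div_nonneg (zero_le_one) (sq_nonneg u)]

lemma Fb_hasDeriv {u : ℝ} (hu : 0 < u) :
    HasDerivAt Fb (Real.log (1 + 1/u^2)) u := by
  have hne : u ≠ 0 := ne_of_gt hu
  have h1 : HasDerivAt (fun u : ℝ => 1 + 1/u^2) (-2/u^3) u := by
    have : HasDerivAt (fun u : ℝ => u^2) (2*u) u := by
      simpa using hasDerivAt_pow 2 u
    have h2 := this.inv (pow_ne_zero 2 hne)
    have h3 := h2.const_add 1
    have h5 : HasDerivAt (fun u : ℝ => 1 + 1/u^2) (-(2 * u) / (u ^ 2) ^ 2) u := by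
      simp only [one_div]; exact h3
    exact h5.congr_deriv (by rw [div_eq_div_iff (by positivity) (by positivity)]; ring)
  have hpos : 0 < 1 + 1/u^2 := by positivity
  have h2 : HasDerivAt (fun u : ℝ => Real.log (1 + 1/u^2)) ((-2/u^3)/(1 + 1/u^2)) u :=
    h1.log (ne_of_gt hpos)
  have h3 : HasDerivAt (fun u : ℝ => u * Real.log (1 + 1/u^2))
      (Real.log (1 + 1/u^2) + u * ((-2/u^3)/(1 + 1/u^2))) u := by
    exact ((hasDerivAt_id' u).mul h2).congr_deriv (by ring)
  have h4 : HasDerivAt (fun u : ℝ => 2 * Real.arctan u) (2 * (1/(1+u^2))) u :=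
    (Real.hasDerivAt_arctan u).const_mul 2
  have := h3.add h4
  refine this.congr_deriv ?_
  have : u * ((-2/u^3)/(1 + 1/u^2)) = -(2 * (1/(1+u^2))) := by
    field_simp
    ring
  rw [this]; ring

lemma tendsto_mul_log_zero :
    Tendsto (fun u : ℝ => u * Real.log (1 + 1/u^2)) (nhdsWithin 0 (Ioi 0)) (nhds 0) := by
  have heq : ∀ u ∈ Ioi (0:ℝ), u * Real.log (1 + 1/u^2)
      = u * Real.log (u^2+1) - 2 * (Real.log u * u) := by
    intro u hu
    have hu : (0:ℝ) < u := hu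
    have : (1 : ℝ) + 1/u^2 = (u^2+1)/u^2 := by field_simp
    rw [this, Real.log_div (by positivity) (by positivity), Real.log_pow]
    push_cast
    ring
  have h1 : Tendsto (fun u : ℝ => u * Real.log (u^2+1)) (nhdsWithin 0 (Ioi 0)) (nhds 0) := by
    have : ContinuousAt (fun u : ℝ => u * Real.log (u^2+1)) 0 := by
      apply ContinuousAt.mul continuousAt_id
      apply (Real.continuousAt_log (by norm_num)).comp
      fun_prop
    simpa using this.continuousWithinAt.tendsto
  have h2 : Tendsto (fun u : ℝ => 2 * (Real.log u * u)) (nhdsWithin 0 (Ioi 0)) (nhds 0) := by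
    have h := tendsto_log_mul_rpow_nhdsGT_zero (r := 1) one_pos
    simp only [Real.rpow_one] at h
    simpa using h.const_mul 2
  have := h1.sub h2
  rw [sub_zero] at this
  exact this.congr' (by filter_upwards [self_mem_nhdsWithin] with u hu using (heq u hu).symm)

lemma Fb_cont0 : ContinuousWithinAt Fb (Ici 0) 0 := by
  rw [← continuousWithinAt_Ioi_iff_Ici]
  unfold ContinuousWithinAt
  rw [Fb_zero]
  have h2 : Tendsto (fun u : ℝ => 2 * Real.arctan u) (nhdsWithin 0 (Ioi 0)) (nhds 0) := by
    have : ContinuousAt (fun u : ℝ => 2 * Real.arctan u) 0 :=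
      (Real.continuous_arctan.continuousAt).const_mul 2
    simpa using this.continuousWithinAt.tendsto
  have := tendsto_mul_log_zero.add h2
  rw [add_zero] at this
  exact this

lemma Fb_tendsto_pi : Tendsto Fb atTop (nhds Real.pi) := by
  have h1 : Tendsto (fun u : ℝ => u * Real.log (1 + 1/u^2)) atTop (nhds 0) := by
    apply squeeze_zero_norm' (a := fun u : ℝ => 1/u)
    · filter_upwards [eventually_gt_atTop (0:ℝ)] with u hu
      rw [Real.norm_eq_abs, abs_of_nonneg (mul_nonneg hu.le gb_nonneg)]
      have : Real.log (1 + 1/u^2) ≤ 1/u^2 := by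
        have := Real.log_le_sub_one_of_pos (x := 1 + 1/u^2) (by positivity)
        linarith
      calc u * Real.log (1 + 1/u^2) ≤ u * (1/u^2) := by
            exact mul_le_mul_of_nonneg_left this hu.le
        _ = 1/u := by field_simp
    · simpa [one_div] using (tendsto_inv_atTop_zero (𝕜 := ℝ))
  have h2 : Tendsto (fun u : ℝ => 2 * Real.arctan u) atTop (nhds Real.pi) := by
    have := (Real.tendsto_arctan_atTop.mono_right nhdsWithin_le_nhds).const_mul (2:ℝ)
    simpa [mul_div_cancel₀] using this
  have := h1.add h2
  rw [zero_add] at this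
  exact this

lemma gb_integrableOn : IntegrableOn (fun u : ℝ => Real.log (1 + 1/u^2)) (Ioi 0) := by
  exact integrableOn_Ioi_deriv_of_nonneg Fb_cont0 (fun x hx => Fb_hasDeriv hx)
    (fun x _ => gb_nonneg) Fb_tendsto_pi

lemma gb_integral0 : ∫ u in Ioi (0:ℝ), Real.log (1 + 1/u^2) = Real.pi := by
  have := integral_Ioi_of_hasDerivAt_of_nonneg Fb_cont0 (fun x hx => Fb_hasDeriv hx)
    (fun x _ => gb_nonneg) Fb_tendsto_pi
  simpa [Fb_zero] using this

lemma gb_integral_c {c : ℝ} (hc : 0 < c) :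
    ∫ u in Ioi c, Real.log (1 + 1/u^2) = Real.pi - Fb c := by
  exact integral_Ioi_of_hasDerivAt_of_nonneg
    ((Fb_hasDeriv hc).continuousAt.continuousWithinAt)
    (fun x hx => Fb_hasDeriv (lt_trans hc hx)) (fun x _ => gb_nonneg) Fb_tendsto_pi

lemma gb_integral_Ioc {c : ℝ} (hc : 0 < c) :
    ∫ u in Ioc 0 c, Real.log (1 + 1/u^2) = Fb c := by
  have hsplit := setIntegral_union (f := fun u : ℝ => Real.log (1 + 1/u^2)) (μ := volume)
    (Set.Ioc_disjoint_Ioi (le_refl c)) measurableSet_Ioi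
    (gb_integrableOn.mono_set Set.Ioc_subset_Ioi_self)
    (gb_integrableOn.mono_set (Set.Ioi_subset_Ioi hc.le))
  rw [Set.Ioc_union_Ioi_eq_Ioi hc.le] at hsplit
  rw [gb_integral0, gb_integral_c hc] at hsplit
  linarith
lemma f_integrableOn {φC : ℂ → ℂ} {m σ2 : ℝ} {μ : Measure ℝ} (hm : 0 ≤ m) (hσ : 0 ≤ σ2)
    (hμ0 : μ (Set.Iic 0) = 0) (hμint : Integrable (fun y : ℝ => min 1 y) μ)
    (hrepC : ∀ z : ℂ, 0 ≤ z.re →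
      φC z = (m : ℂ) + (σ2 : ℂ) * z + ∫ y, (1 - Complex.exp (-(z * (y : ℂ)))) ∂μ)
    (hnd : ¬ (m = 0 ∧ σ2 = 0 ∧ μ = 0)) {b : ℝ} (hb : 0 < b) :
    IntegrableOn (fun u : ℝ =>
      Real.log (‖φC (((b * u : ℝ) : ℂ) + (b : ℝ) * Complex.I)‖ / (φC ((b * u : ℝ) : ℂ)).re))
      (Set.Ioi 0) := by
  apply Integrable.mono' (gb_integrableOn.const_mul (1/2 : ℝ))
  · exact (f_continuousOn hm hσ hμ0 hμint hrepC hnd hb).aestronglyMeasurable measurableSet_Ioi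
  · rw [ae_restrict_iff' measurableSet_Ioi]
    filter_upwards with u hu
    have hs := f_sandwich hm hσ hμ0 hμint hrepC hnd hb hu
    rw [Real.norm_eq_abs, abs_of_nonneg hs.1]
    exact hs.2.1

/-- comparison of `Θ_φ(a,b)` with `Θ_φ(0,b)`; in particular
`liminf_{b→∞} Θ_φ(a,b)` is independent of `a ≥ 0` and belongs to `[0, π/2]`. -/
theorem bernstein_Theta_liminf_independent
    (φC : ℂ → ℂ) (m σ2 : ℝ) (μ : Measure ℝ)
    (hm : 0 ≤ m) (hσ : 0 ≤ σ2)
    (hμ0 : μ (Set.Iic 0) = 0)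
    (hμint : Integrable (fun y : ℝ => min 1 y) μ)
    (hrepC : ∀ z : ℂ, 0 ≤ z.re →
      φC z = (m : ℂ) + (σ2 : ℂ) * z + ∫ y, (1 - Complex.exp (-(z * (y : ℂ)))) ∂μ)
    (hnd : ¬ (m = 0 ∧ σ2 = 0 ∧ μ = 0)) :
    (∀ a b : ℝ, 0 < a → 0 < b →
        Theta φC 0 b - a / b * Real.log (1 + b ^ 2 / a ^ 2) - Real.arctan (a / b)
            ≤ Theta φC a b
      ∧ Theta φC a b ≤ Theta φC 0 b)
    ∧ (∀ a : ℝ, 0 ≤ a →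
        Filter.liminf (fun b : ℝ => Theta φC a b) Filter.atTop
            = Filter.liminf (fun b : ℝ => Theta φC 0 b) Filter.atTop
      ∧ Filter.liminf (fun b : ℝ => Theta φC a b) Filter.atTop
          ∈ Set.Icc (0:ℝ) (Real.pi / 2)) := by
  have hTheta : ∀ a b : ℝ, Theta φC a b = ∫ u in Set.Ioi (a/b),
      Real.log (‖φC (((b * u : ℝ) : ℂ) + (b : ℝ) * Complex.I)‖ / (φC ((b * u : ℝ) : ℂ)).re) :=
    fun a b => rfl
  have g2int : IntegrableOn (fun u : ℝ => (1/2:ℝ) * Real.log (1 + 1/u^2)) (Set.Ioi 0) :=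
    gb_integrableOn.const_mul _
  have g2nonneg : ∀ u : ℝ, 0 ≤ (1/2:ℝ) * Real.log (1 + 1/u^2) := fun u => by
    have := gb_nonneg (u := u); linarith
  have g2tot : ∫ u in Set.Ioi (0:ℝ), (1/2:ℝ) * Real.log (1 + 1/u^2) = Real.pi/2 := by
    rw [integral_const_mul, gb_integral0]; ring
  have part1 : ∀ a b : ℝ, 0 < a → 0 < b →
      Theta φC 0 b - a / b * Real.log (1 + b ^ 2 / a ^ 2) - Real.arctan (a / b)
        ≤ Theta φC a b ∧ Theta φC a b ≤ Theta φC 0 b := by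
    intro a b ha hb
    set c := a / b with hc
    have hc0 : 0 < c := div_pos ha hb
    have hint0 := f_integrableOn hm hσ hμ0 hμint hrepC hnd hb
    have hsplit : (∫ u in Set.Ioi (0:ℝ),
        Real.log (‖φC (((b * u : ℝ) : ℂ) + (b : ℝ) * Complex.I)‖ / (φC ((b * u : ℝ) : ℂ)).re))
        = (∫ u in Set.Ioc 0 c,
        Real.log (‖φC (((b * u : ℝ) : ℂ) + (b : ℝ) * Complex.I)‖ / (φC ((b * u : ℝ) : ℂ)).re))
        + ∫ u in Set.Ioi c,
        Real.log (‖φC (((b * u : ℝ) : ℂ) + (b : ℝ) * Complex.I)‖ / (φC ((b * u : ℝ) : ℂ)).re) := by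
      rw [← setIntegral_union (Set.Ioc_disjoint_Ioi le_rfl) measurableSet_Ioi
        (hint0.mono_set Set.Ioc_subset_Ioi_self) (hint0.mono_set (Set.Ioi_subset_Ioi hc0.le)),
        Set.Ioc_union_Ioi_eq_Ioi hc0.le]
    have hT0 : Theta φC 0 b = ∫ u in Set.Ioi (0:ℝ),
        Real.log (‖φC (((b * u : ℝ) : ℂ) + (b : ℝ) * Complex.I)‖ / (φC ((b * u : ℝ) : ℂ)).re) := by
      rw [hTheta]; norm_num
    have hTa : Theta φC a b = ∫ u in Set.Ioi c,
        Real.log (‖φC (((b * u : ℝ) : ℂ) + (b : ℝ) * Complex.I)‖ / (φC ((b * u : ℝ) : ℂ)).re) :=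
      hTheta a b
    have hIoc_nonneg : 0 ≤ ∫ u in Set.Ioc 0 c,
        Real.log (‖φC (((b * u : ℝ) : ℂ) + (b : ℝ) * Complex.I)‖ / (φC ((b * u : ℝ) : ℂ)).re) := by
      apply setIntegral_nonneg measurableSet_Ioc
      intro u hu
      exact (f_sandwich hm hσ hμ0 hμint hrepC hnd hb hu.1).1
    have hIoc_le : (∫ u in Set.Ioc 0 c,
        Real.log (‖φC (((b * u : ℝ) : ℂ) + (b : ℝ) * Complex.I)‖ / (φC ((b * u : ℝ) : ℂ)).re))
        ≤ Fb c / 2 := by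
      calc (∫ u in Set.Ioc 0 c,
          Real.log (‖φC (((b * u : ℝ) : ℂ) + (b : ℝ) * Complex.I)‖ / (φC ((b * u : ℝ) : ℂ)).re))
          ≤ ∫ u in Set.Ioc 0 c, (1/2:ℝ) * Real.log (1 + 1/u^2) := by
            apply setIntegral_mono_on (hint0.mono_set Set.Ioc_subset_Ioi_self)
              (g2int.mono_set Set.Ioc_subset_Ioi_self) measurableSet_Ioc
            intro u hu
            exact (f_sandwich hm hσ hμ0 hμint hrepC hnd hb hu.1).2.1
        _ = Fb c / 2 := by rw [integral_const_mul, gb_integral_Ioc hc0]; ring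
    constructor
    · have hL : Real.log (1 + 1/c^2) = Real.log (1 + b^2/a^2) := by
        rw [hc, div_pow, one_div_div]
      have hFb : Fb c / 2 = c/2 * Real.log (1 + b^2/a^2) + Real.arctan c := by
        rw [Fb, hL]; ring
      have hlog_nn : 0 ≤ Real.log (1 + b^2/a^2) := by rw [← hL]; exact gb_nonneg
      rw [hT0, hTa, hsplit]
      rw [hFb] at hIoc_le
      nlinarith
    · rw [hT0, hTa, hsplit]
      linarith
  have hbound : ∀ a b : ℝ, 0 ≤ a → 0 < b → Theta φC a b ∈ Set.Icc (0:ℝ) (Real.pi/2) := by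
    intro a b ha hb
    have hc0 : 0 ≤ a/b := div_nonneg ha hb.le
    constructor
    · rw [hTheta]
      apply setIntegral_nonneg measurableSet_Ioi
      intro u hu
      exact (f_sandwich hm hσ hμ0 hμint hrepC hnd hb (lt_of_le_of_lt hc0 hu)).1
    · rw [hTheta]
      calc (∫ u in Set.Ioi (a/b),
          Real.log (‖φC (((b * u : ℝ) : ℂ) + (b : ℝ) * Complex.I)‖ / (φC ((b * u : ℝ) : ℂ)).re))
          ≤ ∫ u in Set.Ioi (a/b), (1/2:ℝ) * Real.log (1 + 1/u^2) := by
            apply setIntegral_mono_on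
              ((f_integrableOn hm hσ hμ0 hμint hrepC hnd hb).mono_set (Set.Ioi_subset_Ioi hc0))
              (g2int.mono_set (Set.Ioi_subset_Ioi hc0)) measurableSet_Ioi
            intro u hu
            exact (f_sandwich hm hσ hμ0 hμint hrepC hnd hb (lt_of_le_of_lt hc0 hu)).2.1
        _ ≤ ∫ u in Set.Ioi (0:ℝ), (1/2:ℝ) * Real.log (1 + 1/u^2) := by
            apply setIntegral_mono_set g2int
              (Filter.Eventually.of_forall fun u => g2nonneg u)
              ((Set.Ioi_subset_Ioi hc0).eventuallyLE)
        _ = Real.pi/2 := g2tot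
  refine ⟨part1, ?_⟩
  have hmem : ∀ a : ℝ, 0 ≤ a →
      Filter.liminf (fun b : ℝ => Theta φC a b) Filter.atTop ∈ Set.Icc (0:ℝ) (Real.pi/2) := by
    intro a ha
    have hub : ∀ᶠ b in Filter.atTop, Theta φC a b ∈ Set.Icc (0:ℝ) (Real.pi/2) := by
      filter_upwards [Filter.eventually_gt_atTop (0:ℝ)] with b hb using hbound a b ha hb
    have hB_le : Filter.IsBoundedUnder (· ≤ ·) Filter.atTop (fun b : ℝ => Theta φC a b) :=
      ⟨Real.pi/2, Filter.eventually_map.mpr (by filter_upwards [hub] with b hb using hb.2)⟩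
    have hB_ge : Filter.IsBoundedUnder (· ≥ ·) Filter.atTop (fun b : ℝ => Theta φC a b) :=
      ⟨0, Filter.eventually_map.mpr (by filter_upwards [hub] with b hb using hb.1)⟩
    constructor
    · refine Filter.le_liminf_of_le (hB_le.isCoboundedUnder_ge) ?_
      filter_upwards [hub] with b hb using hb.1
    · refine Filter.liminf_le_of_frequently_le ?_ hB_ge
      exact (hub.mono fun b hb => hb.2).frequently
  intro a ha
  refine ⟨?_, hmem a ha⟩
  rcases eq_or_lt_of_le ha with rfl | ha'
  · rfl
  -- bounds for both functions
  have hubA : ∀ᶠ b in Filter.atTop, Theta φC a b ∈ Set.Icc (0:ℝ) (Real.pi/2) := by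
    filter_upwards [Filter.eventually_gt_atTop (0:ℝ)] with b hb using hbound a b ha hb
  have hub0 : ∀ᶠ b in Filter.atTop, Theta φC 0 b ∈ Set.Icc (0:ℝ) (Real.pi/2) := by
    filter_upwards [Filter.eventually_gt_atTop (0:ℝ)] with b hb using hbound 0 b le_rfl hb
  have hA_le : Filter.IsBoundedUnder (· ≤ ·) Filter.atTop (fun b : ℝ => Theta φC a b) :=
    ⟨Real.pi/2, Filter.eventually_map.mpr (by filter_upwards [hubA] with b hb using hb.2)⟩
  have hA_ge : Filter.IsBoundedUnder (· ≥ ·) Filter.atTop (fun b : ℝ => Theta φC a b) :=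
    ⟨0, Filter.eventually_map.mpr (by filter_upwards [hubA] with b hb using hb.1)⟩
  have h0_le : Filter.IsBoundedUnder (· ≤ ·) Filter.atTop (fun b : ℝ => Theta φC 0 b) :=
    ⟨Real.pi/2, Filter.eventually_map.mpr (by filter_upwards [hub0] with b hb using hb.2)⟩
  have h0_ge : Filter.IsBoundedUnder (· ≥ ·) Filter.atTop (fun b : ℝ => Theta φC 0 b) :=
    ⟨0, Filter.eventually_map.mpr (by filter_upwards [hub0] with b hb using hb.1)⟩
  -- the error term tends to 0
  have hβ : Filter.Tendsto
      (fun b : ℝ => a / b * Real.log (1 + b ^ 2 / a ^ 2) + Real.arctan (a / b))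
      Filter.atTop (nhds 0) := by
    have h1 : Filter.Tendsto (fun b : ℝ => a/b) Filter.atTop (nhdsWithin 0 (Set.Ioi 0)) := by
      apply tendsto_nhdsWithin_of_tendsto_nhds_of_eventually_within
      · have := tendsto_inv_atTop_zero (𝕜 := ℝ)
        have h := this.const_mul a
        rw [mul_zero] at h
        exact h.congr fun b => by rw [div_eq_mul_inv]
      · filter_upwards [Filter.eventually_gt_atTop (0:ℝ)] with b hb using div_pos ha' hb
    have h2 : Filter.Tendsto (fun c : ℝ => c * Real.log (1 + 1/c^2) + Real.arctan c)
        (nhdsWithin 0 (Set.Ioi 0)) (nhds 0) := by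
      have harc : Filter.Tendsto Real.arctan (nhdsWithin 0 (Set.Ioi 0)) (nhds 0) := by
        have := (Real.continuous_arctan.tendsto 0).mono_left
          (nhdsWithin_le_nhds (s := Set.Ioi (0:ℝ)))
        simpa [Real.arctan_zero] using this
      have := tendsto_mul_log_zero.add harc
      rw [add_zero] at this
      exact this
    have h3 := h2.comp h1
    have h4 : ∀ b : ℝ, (1:ℝ) + 1/(a/b)^2 = 1 + b^2/a^2 := fun b => by
      rw [div_pow, one_div_div]
    exact h3.congr fun b => by simp only [Function.comp]; rw [h4]
  apply le_antisymm
  · apply Filter.liminf_le_liminf ?_ hA_ge (h0_le.isCoboundedUnder_ge)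
    filter_upwards [Filter.eventually_gt_atTop (0:ℝ)] with b hb
    exact (part1 a b ha' hb).2
  · apply le_of_forall_pos_le_add
    intro ε hε
    have hev2 : ∀ᶠ b in Filter.atTop, Theta φC 0 b ≤ Theta φC a b + ε := by
      filter_upwards [Filter.eventually_gt_atTop (0:ℝ),
        hβ.eventually (eventually_le_nhds hε)] with b hb hb2
      have := (part1 a b ha' hb).1
      linarith
    have hcob : Filter.IsCoboundedUnder (· ≥ ·) Filter.atTop
        (fun b : ℝ => Theta φC a b + ε) := by
      apply Filter.IsBoundedUnder.isCoboundedUnder_ge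
      exact ⟨Real.pi/2 + ε, Filter.eventually_map.mpr
        (by filter_upwards [hubA] with b hb using by linarith [hb.2])⟩
    calc Filter.liminf (fun b : ℝ => Theta φC 0 b) Filter.atTop
        ≤ Filter.liminf (fun b : ℝ => Theta φC a b + ε) Filter.atTop :=
          Filter.liminf_le_liminf hev2 h0_ge hcob
      _ = Filter.liminf (fun b : ℝ => Theta φC a b) Filter.atTop + ε :=
          liminf_add_const Filter.atTop _ ε (hA_le.isCoboundedUnder_ge) hA_ge
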